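/- arXiv:2212.05405 — 2 statements merged into one kernel-verified Lean document; each statement's English description precedes it below -/
import Mathlib

section
/- Let L = ∂_t + c₁∂_r and 𝐋 = ∂_t − c₁∂_r with c₁ > 0, ω = x/|x|, r = |x|, and ⃗ω = (−c₁, ω) ∈ ℝ⁴. For any smooth scalar function f on ℝ⁺ × (ℝ³ \ {0}) and r ≥ 1, the full space-time gradient ∂f = (∂_t f, ∇f) satisfies |r ∂f + ⃗ω (2c₁)^{−1} 𝐋(r f)| ≤ C(|Γf| + |f| + ⟨c₁t − r⟩ |∂f|), where Γ ranges over the commuting vector fields (∂_t, ∇, Ω, S) with S = t∂_t + r∂_r, |Γf| denotes the sum of |Γ_a f| over this collection, and ⟨s⟩ = (1+s²)^{1/2}. -/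
noncomputable section

abbrev E3 := EuclideanSpace ℝ (Fin 3)

/-- Time derivative `∂_t f`. -/
def pdt (f : ℝ × E3 → ℝ) (p : ℝ × E3) : ℝ :=
  fderiv ℝ f p ((1 : ℝ), (0 : E3))

/-- Spatial partial derivative `∂_i f`. -/
def pdx (i : Fin 3) (f : ℝ × E3 → ℝ) (p : ℝ × E3) : ℝ :=
  fderiv ℝ f p ((0 : ℝ), EuclideanSpace.single i 1)

/-- Rotation vector field `Ω_{ij} = x_i ∂_j - x_j ∂_i` (0-based indices). -/
def angX (i j : Fin 3) (f : ℝ × E3 → ℝ) (p : ℝ × E3) : ℝ :=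
  p.2 i * pdx j f p - p.2 j * pdx i f p

/-- Scaling vector field `S = t ∂_t + r ∂_r = t ∂_t + Σ_i x_i ∂_i`. -/
def Sop (f : ℝ × E3 → ℝ) (p : ℝ × E3) : ℝ :=
  p.1 * pdt f p + ∑ i, p.2 i * pdx i f p

/-- Sum `|Γ f|` over the collection `Γ = (∂_t, ∇, Ω, S)`. -/
def gammaSum (f : ℝ × E3 → ℝ) (p : ℝ × E3) : ℝ :=
  |pdt f p| + ∑ i, |pdx i f p|
    + |angX 0 1 f p| + |angX 0 2 f p| + |angX 1 2 f p| + |Sop f p|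

/-- Japanese bracket `⟨s⟩ = (1+s²)^{1/2}`. -/
def jpn (s : ℝ) : ℝ := Real.sqrt (1 + s ^ 2)

/-- Euclidean norm of a space-time 4-vector. -/
def norm4 (a : Fin 4 → ℝ) : ℝ := Real.sqrt (∑ μ, (a μ) ^ 2)

/-- Space-time gradient `∂ f = (∂_t f, ∇ f)` as a 4-vector. -/
def dfour (f : ℝ × E3 → ℝ) (p : ℝ × E3) : Fin 4 → ℝ :=
  ![pdt f p, pdx 0 f p, pdx 1 f p, pdx 2 f p]

/-- Null covector `⃗ω = (-c₁, ω)`, `ω = x/|x|`. -/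
def omega4 (c1 : ℝ) (p : ℝ × E3) : Fin 4 → ℝ :=
  ![-c1, p.2 0 / ‖p.2‖, p.2 1 / ‖p.2‖, p.2 2 / ‖p.2‖]

/-- The "bad" derivative `𝐋 = ∂_t - c₁ ∂_r`. -/
def Lbar (c1 : ℝ) (f : ℝ × E3 → ℝ) (p : ℝ × E3) : ℝ :=
  pdt f p - c1 * ∑ i, (p.2 i / ‖p.2‖) * pdx i f p

/-! ### Auxiliary lemmas -/

lemma hasFDerivAt_norm' (x : E3) (hx : x ≠ 0) :
    HasFDerivAt (fun y : E3 => ‖y‖) (‖x‖⁻¹ • (innerSL ℝ x)) x := by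
  have hpos : (0:ℝ) < ‖x‖ := norm_pos_iff.mpr hx
  have hin : HasFDerivAt (fun y : E3 => (inner ℝ y y : ℝ))
      ((fderivInnerCLM ℝ (x, x)).comp
        ((ContinuousLinearMap.id ℝ E3).prod (ContinuousLinearMap.id ℝ E3))) x :=
    (hasFDerivAt_id x).inner ℝ (hasFDerivAt_id x)
  have hne : (inner ℝ x x : ℝ) ≠ 0 := inner_self_ne_zero.mpr hx
  have hs : HasDerivAt Real.sqrt (1 / (2 * Real.sqrt (inner ℝ x x : ℝ))) (inner ℝ x x : ℝ) :=
    Real.hasDerivAt_sqrt hne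
  have hcomp := HasDerivAt.comp_hasFDerivAt (f := fun y : E3 => (inner ℝ y y : ℝ)) x hs hin
  have heq : (fun y : E3 => Real.sqrt (inner ℝ y y : ℝ)) = fun y : E3 => ‖y‖ := by
    funext y
    rw [real_inner_self_eq_norm_mul_norm, Real.sqrt_mul_self (norm_nonneg y)]
  simp only [Function.comp_def] at hcomp
  rw [heq] at hcomp
  refine hcomp.congr_fderiv ?_
  symm
  have hsq : Real.sqrt (inner ℝ x x : ℝ) = ‖x‖ := by
    rw [real_inner_self_eq_norm_mul_norm]; exact Real.sqrt_mul_self (norm_nonneg x)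
  ext v
  simp only [ContinuousLinearMap.smul_apply, innerSL_apply_apply, ContinuousLinearMap.coe_comp',
    Function.comp_apply, fderivInnerCLM_apply, smul_eq_mul, ContinuousLinearMap.prod_apply,
    ContinuousLinearMap.coe_id', id_eq, hsq]
  rw [real_inner_comm v x]
  field_simp
  ring

lemma hasFDerivAt_rmul (f : ℝ × E3 → ℝ) (hf : ContDiff ℝ (⊤ : ℕ∞) f) (p : ℝ × E3) (hp : p.2 ≠ 0) :
    HasFDerivAt (fun q : ℝ × E3 => ‖q.2‖ * f q)
      (‖p.2‖ • fderiv ℝ f p +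
        f p • ((‖p.2‖⁻¹ • innerSL ℝ p.2).comp (ContinuousLinearMap.snd ℝ ℝ E3))) p := by
  have hn : HasFDerivAt (fun q : ℝ × E3 => ‖q.2‖)
      ((‖p.2‖⁻¹ • innerSL ℝ p.2).comp (ContinuousLinearMap.snd ℝ ℝ E3)) p :=
    (hasFDerivAt_norm' p.2 hp).comp p (hasFDerivAt_snd)
  have hfp : HasFDerivAt f (fderiv ℝ f p) p :=
    (hf.differentiable (by simp) p).hasFDerivAt
  exact hn.mul hfp

lemma pdt_rmul (f : ℝ × E3 → ℝ) (hf : ContDiff ℝ (⊤ : ℕ∞) f) (p : ℝ × E3) (hp : p.2 ≠ 0) :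
    pdt (fun q => ‖q.2‖ * f q) p = ‖p.2‖ * pdt f p := by
  have h := (hasFDerivAt_rmul f hf p hp).fderiv
  unfold pdt
  rw [h]
  simp

lemma pdx_rmul (f : ℝ × E3 → ℝ) (hf : ContDiff ℝ (⊤ : ℕ∞) f) (p : ℝ × E3) (hp : p.2 ≠ 0)
    (i : Fin 3) :
    pdx i (fun q => ‖q.2‖ * f q) p = ‖p.2‖ * pdx i f p + f p * (p.2 i / ‖p.2‖) := by
  have h := (hasFDerivAt_rmul f hf p hp).fderiv
  unfold pdx
  rw [h]
  simp [real_inner_comm, EuclideanSpace.inner_single_right, div_eq_inv_mul]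

lemma tbnd {x r z M : ℝ} (hx : |x| ≤ r) (hr : 0 < r) (hz : |z| ≤ M) : |x * z / r| ≤ M := by
  rw [abs_div, abs_mul, abs_of_pos hr, div_le_iff₀ hr]
  nlinarith [abs_nonneg z, abs_nonneg x]

lemma tbnd2 {x r c1 W M : ℝ} (hx : |x| ≤ r) (hr : 0 < r) (hc1 : 0 < c1) (hW : |W| ≤ M) :
    |x * W / (2*c1*r)| ≤ M / (2*c1) := by
  rw [abs_div, abs_mul, abs_of_pos (by positivity : (0:ℝ) < 2*c1*r),
    div_le_div_iff₀ (by positivity) (by positivity)]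
  have h1 : |x| * |W| ≤ r * M := mul_le_mul hx hW (abs_nonneg W) (le_of_lt hr)
  nlinarith [abs_nonneg x, abs_nonneg W]

lemma tbnd3 {x r fp M : ℝ} (hx : |x| ≤ r) (hr : 0 < r) (hF : |fp| ≤ M) :
    |-(x * fp) / (2*r)| ≤ M / 2 := by
  rw [abs_div, abs_neg, abs_mul, abs_of_pos (by positivity : (0:ℝ) < 2*r),
    div_le_div_iff₀ (by positivity) (by norm_num)]
  have h1 : |x| * |fp| ≤ r * M := mul_le_mul hx hF (abs_nonneg fp) (le_of_lt hr)
  nlinarith [abs_nonneg x, abs_nonneg fp]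

lemma abs_add_four (a b c d : ℝ) : |a + b + c + d| ≤ |a| + |b| + |c| + |d| := by
  calc |a + b + c + d| ≤ |a + b + c| + |d| := abs_add_le _ _
    _ ≤ |a| + |b| + |c| + |d| := by have := abs_add_three a b c; linarith

lemma sqrt_le_sum4 (a b c d : ℝ) :
    Real.sqrt (a^2 + b^2 + c^2 + d^2) ≤ |a| + |b| + |c| + |d| := by
  have h : a^2 + b^2 + c^2 + d^2 ≤ (|a| + |b| + |c| + |d|)^2 := by
    nlinarith [sq_abs a, sq_abs b, sq_abs c, sq_abs d,
      mul_nonneg (abs_nonneg a) (abs_nonneg b), mul_nonneg (abs_nonneg a) (abs_nonneg c),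
      mul_nonneg (abs_nonneg a) (abs_nonneg d), mul_nonneg (abs_nonneg b) (abs_nonneg c),
      mul_nonneg (abs_nonneg b) (abs_nonneg d), mul_nonneg (abs_nonneg c) (abs_nonneg d)]
  calc Real.sqrt (a^2 + b^2 + c^2 + d^2) ≤ Real.sqrt ((|a| + |b| + |c| + |d|)^2) :=
      Real.sqrt_le_sqrt h
    _ = |a| + |b| + |c| + |d| := Real.sqrt_sq (by positivity)

lemma abs_le_sqrt4 (a b c d : ℝ) : |a| ≤ Real.sqrt (a^2 + b^2 + c^2 + d^2) := by
  rw [← Real.sqrt_sq_eq_abs]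
  exact Real.sqrt_le_sqrt (by nlinarith [sq_nonneg b, sq_nonneg c, sq_nonneg d])

set_option maxHeartbeats 1000000 in
lemma key_est (c1 t r x0 x1 x2 a u0 u1 u2 fp Lb G N J F : ℝ)
    (hc1 : 0 < c1) (hr : 1 ≤ r)
    (hsum : x0^2 + x1^2 + x2^2 = r^2)
    (hLb : Lb = r*a - c1*fp - c1*(x0*u0 + x1*u1 + x2*u2))
    (hS : |t*a + (x0*u0 + x1*u1 + x2*u2)| ≤ G)
    (hA : |x0*u1 - x1*u0| ≤ G) (hB : |x0*u2 - x2*u0| ≤ G) (hC : |x1*u2 - x2*u1| ≤ G)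
    (ha : |a| ≤ N) (hJ : |c1*t - r| ≤ J) (hF : |fp| ≤ F) :
    |r*a + (-c1)*(2*c1)⁻¹*Lb| + |r*u0 + (x0/r)*(2*c1)⁻¹*Lb|
      + |r*u1 + (x1/r)*(2*c1)⁻¹*Lb| + |r*u2 + (x2/r)*(2*c1)⁻¹*Lb|
      ≤ (8 + c1 + 2/c1) * (G + F + J*N) := by
  have hr0 : (0:ℝ) < r := lt_of_lt_of_le one_pos hr
  have hG : 0 ≤ G := le_trans (abs_nonneg _) hS
  have hN : 0 ≤ N := le_trans (abs_nonneg _) ha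
  have hJ0 : 0 ≤ J := le_trans (abs_nonneg _) hJ
  have hF0 : 0 ≤ F := le_trans (abs_nonneg _) hF
  have hx0 : |x0| ≤ r := by
    nlinarith [abs_nonneg x0, sq_abs x0, abs_nonneg x1, sq_abs x1, abs_nonneg x2, sq_abs x2]
  have hx1 : |x1| ≤ r := by
    nlinarith [abs_nonneg x0, sq_abs x0, abs_nonneg x1, sq_abs x1, abs_nonneg x2, sq_abs x2]
  have hx2 : |x2| ≤ r := by
    nlinarith [abs_nonneg x0, sq_abs x0, abs_nonneg x1, sq_abs x1, abs_nonneg x2, sq_abs x2]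
  set S := t*a + (x0*u0 + x1*u1 + x2*u2) with hSdef
  set W := c1*S + (r - c1*t)*a with hWdef
  have hW : |W| ≤ c1*G + J*N := by
    have h1 : |c1*S| ≤ c1*G := by
      rw [abs_mul, abs_of_pos hc1]; exact mul_le_mul_of_nonneg_left hS (le_of_lt hc1)
    have h2 : |(r - c1*t)*a| ≤ J*N := by
      rw [abs_mul, abs_sub_comm r (c1*t)]
      exact mul_le_mul hJ ha (abs_nonneg _) hJ0
    calc |W| ≤ |c1*S| + |(r - c1*t)*a| := abs_add_le _ _
      _ ≤ c1*G + J*N := by linarith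
  have h0 : |r*a + (-c1)*(2*c1)⁻¹*Lb| ≤ (c1*G + J*N + c1*F)/2 := by
    have hV0 : r*a + (-c1)*(2*c1)⁻¹*Lb = (W + c1*fp)/2 := by
      rw [hLb, hWdef, hSdef]; field_simp; ring
    rw [hV0]
    have h3 : |c1*fp| ≤ c1*F := by
      rw [abs_mul, abs_of_pos hc1]; exact mul_le_mul_of_nonneg_left hF (le_of_lt hc1)
    have h4 : |W + c1*fp| ≤ c1*G + J*N + c1*F :=
      le_trans (abs_add_le _ _) (by linarith)
    rw [abs_div, abs_two]
    linarith
  have hgen : ∀ xi ui A1 A2 z1 z2 : ℝ, |xi| ≤ r → |z1| ≤ G → |z2| ≤ G →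
      r*ui + (xi/r)*(2*c1)⁻¹*Lb
        = A1 * z1 / r + A2 * z2 / r + xi*W/(2*c1*r) + -(xi*fp)/(2*r) →
      |A1| ≤ r → |A2| ≤ r →
      |r*ui + (xi/r)*(2*c1)⁻¹*Lb| ≤ 2*G + (c1*G + J*N)/(2*c1) + F/2 := by
    intro xi ui A1 A2 z1 z2 hxi hz1 hz2 hid hA1 hA2
    rw [hid]
    have t1 := tbnd hA1 hr0 hz1
    have t2 := tbnd hA2 hr0 hz2
    have t3 := tbnd2 hxi hr0 hc1 hW
    have t4 := tbnd3 hxi hr0 hF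
    calc |A1 * z1 / r + A2 * z2 / r + xi*W/(2*c1*r) + -(xi*fp)/(2*r)|
        ≤ |A1 * z1 / r| + |A2 * z2 / r| + |xi*W/(2*c1*r)| + |-(xi*fp)/(2*r)| :=
          abs_add_four _ _ _ _
      _ ≤ 2*G + (c1*G + J*N)/(2*c1) + F/2 := by linarith
  have h1 : |r*u0 + (x0/r)*(2*c1)⁻¹*Lb| ≤ 2*G + (c1*G + J*N)/(2*c1) + F/2 := by
    refine hgen x0 u0 x1 x2 (x1*u0 - x0*u1) (x2*u0 - x0*u2) hx0 ?_ ?_ ?_ hx1 hx2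
    · rw [abs_sub_comm]; exact hA
    · rw [abs_sub_comm]; exact hB
    · rw [hLb, hWdef, hSdef]; field_simp; linear_combination (-2*c1*u0) * hsum
  have h2 : |r*u1 + (x1/r)*(2*c1)⁻¹*Lb| ≤ 2*G + (c1*G + J*N)/(2*c1) + F/2 := by
    refine hgen x1 u1 x0 x2 (x0*u1 - x1*u0) (x2*u1 - x1*u2) hx1 hA ?_ ?_ hx0 hx2
    · rw [abs_sub_comm]; exact hC
    · rw [hLb, hWdef, hSdef]; field_simp; linear_combination (-2*c1*u1) * hsum
  have h3 : |r*u2 + (x2/r)*(2*c1)⁻¹*Lb| ≤ 2*G + (c1*G + J*N)/(2*c1) + F/2 := by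
    refine hgen x2 u2 x0 x1 (x0*u2 - x2*u0) (x1*u2 - x2*u1) hx2 hB hC ?_ hx0 hx1
    rw [hLb, hWdef, hSdef]; field_simp; linear_combination (-2*c1*u2) * hsum
  have hP : 0 ≤ J*N := mul_nonneg hJ0 hN
  have hic : 0 < 1/c1 := by positivity
  have hsplit : (c1*G + J*N)/(2*c1) = G/2 + (J*N) * (1/c1) / 2 := by
    field_simp
  rw [hsplit] at h1 h2 h3
  have hPic : 0 ≤ (J*N) * (1/c1) := mul_nonneg hP hic.le
  have hRHS : (8 + c1 + 2/c1) * (G + F + J*N)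
      = 8*G + 8*F + 8*(J*N) + c1*G + c1*F + c1*(J*N)
        + 2*(G*(1/c1)) + 2*(F*(1/c1)) + 2*((J*N)*(1/c1)) := by ring
  rw [hRHS]
  linarith [mul_nonneg hG hic.le, mul_nonneg hF0 hic.le, hPic,
    mul_nonneg hG hc1.le, mul_nonneg hF0 hc1.le, mul_nonneg hP hc1.le]

/-- For `r ≥ 1`: `|r ∂f + ⃗ω (2c₁)⁻¹ 𝐋(r f)| ≤ C(|Γf| + |f| + ⟨c₁t-r⟩|∂f|)`,
with `C` depending only on `c₁`. -/
theorem spacetime_gradient_null_structure (c1 : ℝ) (hc1 : 0 < c1) :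
    ∃ C : ℝ, 0 < C ∧
      ∀ f : ℝ × E3 → ℝ, ContDiff ℝ (⊤ : ℕ∞) f →
        ∀ p : ℝ × E3, 0 < p.1 → 1 ≤ ‖p.2‖ →
          norm4 (fun μ => ‖p.2‖ * dfour f p μ
              + omega4 c1 p μ * (2 * c1)⁻¹ * Lbar c1 (fun q => ‖q.2‖ * f q) p)
            ≤ C * (gammaSum f p + |f p|
                + jpn (c1 * p.1 - ‖p.2‖) * norm4 (dfour f p)) := by
  refine ⟨8 + c1 + 2/c1, by positivity, ?_⟩
  intro f hf p ht hr
  have hr0 : (0:ℝ) < ‖p.2‖ := lt_of_lt_of_le one_pos hr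
  have hne : p.2 ≠ 0 := by
    intro h; rw [h] at hr0; simp at hr0
  set r := ‖p.2‖ with hrdef
  set a := pdt f p with hadef
  set u0 := pdx 0 f p with hu0def
  set u1 := pdx 1 f p with hu1def
  set u2 := pdx 2 f p with hu2def
  set x0 := p.2 0 with hx0def
  set x1 := p.2 1 with hx1def
  set x2 := p.2 2 with hx2def
  have hsum : x0^2 + x1^2 + x2^2 = r^2 := by
    have h := EuclideanSpace.norm_eq p.2
    rw [Fin.sum_univ_three] at h
    have h2 : r^2 = ‖x0‖^2 + ‖x1‖^2 + ‖x2‖^2 := by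
      rw [hrdef, h]
      rw [Real.sq_sqrt (by positivity)]
    rw [h2]
    simp [sq_abs, Real.norm_eq_abs]
  -- Lbar of r·f
  have hLb : Lbar c1 (fun q => ‖q.2‖ * f q) p
      = r*a - c1*(f p) - c1*(x0*u0 + x1*u1 + x2*u2) := by
    unfold Lbar
    rw [Fin.sum_univ_three, pdt_rmul f hf p hne, pdx_rmul f hf p hne 0,
      pdx_rmul f hf p hne 1, pdx_rmul f hf p hne 2]
    rw [← hrdef, ← hadef, ← hu0def, ← hu1def, ← hu2def, ← hx0def, ← hx1def, ← hx2def]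
    field_simp
    linear_combination (-(c1 * f p)) * hsum
  set Lb := Lbar c1 (fun q => ‖q.2‖ * f q) p with hLbdef
  set G := gammaSum f p with hGdef
  set N := norm4 (dfour f p) with hNdef
  set J := jpn (c1 * p.1 - r) with hJdef
  -- gammaSum bounds
  have hsumnn : 0 ≤ ∑ i, |pdx i f p| :=
    Finset.sum_nonneg fun i _ => abs_nonneg _
  have hGS : |p.1*a + (x0*u0 + x1*u1 + x2*u2)| ≤ G := by
    have hS : Sop f p = p.1*a + (x0*u0 + x1*u1 + x2*u2) := by
      unfold Sop; rw [Fin.sum_univ_three]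
    rw [← hS, hGdef]
    unfold gammaSum
    have := abs_nonneg (pdt f p)
    have := abs_nonneg (angX 0 1 f p)
    have := abs_nonneg (angX 0 2 f p)
    have := abs_nonneg (angX 1 2 f p)
    linarith
  have hang : ∀ i j : Fin 3, angX i j f p = p.2 i * pdx j f p - p.2 j * pdx i f p :=
    fun i j => rfl
  have hGA : |x0*u1 - x1*u0| ≤ G := by
    have h : angX 0 1 f p = x0*u1 - x1*u0 := rfl
    rw [← h, hGdef]; unfold gammaSum
    have := abs_nonneg (pdt f p)
    have := abs_nonneg (angX 0 2 f p)
    have := abs_nonneg (angX 1 2 f p)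
    have := abs_nonneg (Sop f p)
    linarith
  have hGB : |x0*u2 - x2*u0| ≤ G := by
    have h : angX 0 2 f p = x0*u2 - x2*u0 := rfl
    rw [← h, hGdef]; unfold gammaSum
    have := abs_nonneg (pdt f p)
    have := abs_nonneg (angX 0 1 f p)
    have := abs_nonneg (angX 1 2 f p)
    have := abs_nonneg (Sop f p)
    linarith
  have hGC : |x1*u2 - x2*u1| ≤ G := by
    have h : angX 1 2 f p = x1*u2 - x2*u1 := rfl
    rw [← h, hGdef]; unfold gammaSum
    have := abs_nonneg (pdt f p)
    have := abs_nonneg (angX 0 1 f p)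
    have := abs_nonneg (angX 0 2 f p)
    have := abs_nonneg (Sop f p)
    linarith
  -- N bound
  have hNexp : N = Real.sqrt (a^2 + u0^2 + u1^2 + u2^2) := by
    rw [hNdef]; unfold norm4 dfour
    rw [Fin.sum_univ_four]
    norm_num
    rfl
  have ha : |a| ≤ N := by rw [hNexp]; exact abs_le_sqrt4 a u0 u1 u2
  -- J bound
  have hJb : |c1 * p.1 - r| ≤ J := by
    rw [hJdef]; unfold jpn
    rw [← Real.sqrt_sq_eq_abs]
    exact Real.sqrt_le_sqrt (by nlinarith)
  -- the key estimate
  have hkey := key_est c1 p.1 r x0 x1 x2 a u0 u1 u2 (f p) Lb G N J (|f p|)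
    hc1 hr hsum hLb hGS hGA hGB hGC ha hJb le_rfl
  -- expand LHS
  have hV : norm4 (fun μ => r * dfour f p μ
      + omega4 c1 p μ * (2 * c1)⁻¹ * Lb)
      = Real.sqrt ((r*a + (-c1)*(2*c1)⁻¹*Lb)^2 + (r*u0 + (x0/r)*(2*c1)⁻¹*Lb)^2
          + (r*u1 + (x1/r)*(2*c1)⁻¹*Lb)^2 + (r*u2 + (x2/r)*(2*c1)⁻¹*Lb)^2) := by
    unfold norm4
    rw [Fin.sum_univ_four]
    unfold dfour omega4
    norm_num [← hrdef, ← hadef, ← hu0def, ← hu1def, ← hu2def, ← hx0def, ← hx1def, ← hx2def]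
    rfl
  calc norm4 (fun μ => r * dfour f p μ + omega4 c1 p μ * (2 * c1)⁻¹ * Lb)
      = Real.sqrt ((r*a + (-c1)*(2*c1)⁻¹*Lb)^2 + (r*u0 + (x0/r)*(2*c1)⁻¹*Lb)^2
          + (r*u1 + (x1/r)*(2*c1)⁻¹*Lb)^2 + (r*u2 + (x2/r)*(2*c1)⁻¹*Lb)^2) := hV
    _ ≤ |r*a + (-c1)*(2*c1)⁻¹*Lb| + |r*u0 + (x0/r)*(2*c1)⁻¹*Lb|
          + |r*u1 + (x1/r)*(2*c1)⁻¹*Lb| + |r*u2 + (x2/r)*(2*c1)⁻¹*Lb| :=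
        sqrt_le_sum4 _ _ _ _
    _ ≤ (8 + c1 + 2/c1) * (G + |f p| + J*N) := hkey

end
end

section
/- Let c₁ > 0 and 0 < δ < 1/2. There is a constant C (depending on c₁, δ) such that for all t ≥ 0 and r ≥ c₁t/2 ≥ 1: ∫_t^∞ ⟨(c₁+1)τ + r − c₁t⟩^{−2+δ} ⟨r − c₁t⟩^{−1/2} dτ ≤ C ⟨t+r⟩^{−1+δ} ⟨r − c₁t⟩^{−1/2}. -/
/-!
The factor `⟨r - c₁t⟩^{-1/2}` does not depend on `τ`, and the argument `(c₁+1)τ + r - c₁t` is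
affine in `τ` with value `t + r ≥ 1` at `τ = t`. Using `⟨s⟩ ≥ s`, the remaining integral is at most
the explicit integral of `s^{-2+δ}`, namely `(t+r)^{-1+δ} / ((c₁+1)(1-δ))`; since `⟨s⟩ ≤ √2 s` for
`s ≥ 1`, this is at most `√2^{1-δ} ⟨t+r⟩^{-1+δ} / ((c₁+1)(1-δ))`.
-/

open Set Filter Topology MeasureTheory

noncomputable section

lemma jpn_pos (s : ℝ) : 0 < jpn s :=
  Real.sqrt_pos.2 (by positivity)

lemma le_jpn (s : ℝ) : s ≤ jpn s :=
  (le_abs_self s).trans (Real.abs_le_sqrt (by linarith))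

lemma jpn_le_sqrt_two_mul {s : ℝ} (hs : 1 ≤ s) : jpn s ≤ Real.sqrt 2 * s := by
  rw [jpn, Real.sqrt_le_left (by positivity), mul_pow, Real.sq_sqrt zero_le_two]
  nlinarith

lemma rpow_le_sqrt_two_rpow_mul_jpn_rpow {s e : ℝ} (hs : 1 ≤ s) (he : e ≤ 0) :
    s ^ e ≤ Real.sqrt 2 ^ (-e) * jpn s ^ e := by
  have h2 : 0 < Real.sqrt 2 := by positivity
  calc s ^ e = Real.sqrt 2 ^ (-e) * (Real.sqrt 2 * s) ^ e := by
        rw [Real.mul_rpow h2.le (by linarith), ← mul_assoc, ← Real.rpow_add h2, neg_add_cancel,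
          Real.rpow_zero, one_mul]
    _ ≤ Real.sqrt 2 ^ (-e) * jpn s ^ e := by
        refine mul_le_mul_of_nonneg_left ?_ (by positivity)
        exact Real.rpow_le_rpow_of_nonpos (jpn_pos s) (jpn_le_sqrt_two_mul hs) he

section AffinePower

variable {a b q : ℝ}

lemma hasDerivAt_affine_rpow_div {x : ℝ} (ha : a ≠ 0) (hq : q ≠ -1) (hx : 0 < a * x + b) :
    HasDerivAt (fun y => (a * y + b) ^ (q + 1) / (a * (q + 1))) ((a * x + b) ^ q) x := by
  have hq' : q + 1 ≠ 0 := fun h => hq (by linarith)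
  have h := ((((hasDerivAt_id x).const_mul a).add_const b).rpow_const
    (p := q + 1) (Or.inl hx.ne')).div_const (a * (q + 1))
  refine h.congr_deriv ?_
  rw [add_sub_cancel_right, id, mul_one]
  field_simp

lemma tendsto_affine_rpow_div_atTop (ha : 0 < a) (hq : q < -1) :
    Tendsto (fun y => (a * y + b) ^ (q + 1) / (a * (q + 1))) atTop (𝓝 0) := by
  have h := (tendsto_rpow_neg_atTop (by linarith : 0 < -(q + 1))).comp
    (tendsto_atTop_add_const_right _ b (tendsto_id.const_mul_atTop ha))
  simpa using h.div_const (a * (q + 1))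

lemma integrableOn_Ioi_affine_rpow {t : ℝ} (ha : 0 < a) (hq : q < -1) (ht : 0 < a * t + b) :
    IntegrableOn (fun x => (a * x + b) ^ q) (Ioi t) :=
  integrableOn_Ioi_deriv_of_nonneg'
    (fun x hx => hasDerivAt_affine_rpow_div ha.ne' hq.ne (by nlinarith [mem_Ici.1 hx]))
    (fun x hx => Real.rpow_nonneg (by nlinarith [mem_Ioi.1 hx]) q)
    (tendsto_affine_rpow_div_atTop ha hq)

lemma integral_Ioi_affine_rpow {t : ℝ} (ha : 0 < a) (hq : q < -1) (ht : 0 < a * t + b) :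
    ∫ x in Ioi t, (a * x + b) ^ q = (a * t + b) ^ (q + 1) / (a * (-1 - q)) := by
  rw [integral_Ioi_of_hasDerivAt_of_nonneg'
    (fun x hx => hasDerivAt_affine_rpow_div ha.ne' hq.ne (by nlinarith [mem_Ici.1 hx]))
    (fun x hx => Real.rpow_nonneg (by nlinarith [mem_Ioi.1 hx]) q)
    (tendsto_affine_rpow_div_atTop ha hq)]
  rw [show a * (-1 - q) = -(a * (q + 1)) by ring, div_neg, zero_sub]

lemma integral_Ioi_jpn_affine_rpow_le {t : ℝ} (ha : 0 < a) (hq : q < -1)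
    (ht : 0 < a * t + b) :
    ∫ x in Ioi t, jpn (a * x + b) ^ q ≤ (a * t + b) ^ (q + 1) / (a * (-1 - q)) := by
  rw [← integral_Ioi_affine_rpow ha hq ht]
  refine integral_mono_of_nonneg (.of_forall fun x => Real.rpow_nonneg (jpn_pos _).le q)
    (integrableOn_Ioi_affine_rpow ha hq ht) ?_
  filter_upwards [ae_restrict_mem measurableSet_Ioi] with x hx
  exact Real.rpow_le_rpow_of_nonpos (by nlinarith [mem_Ioi.1 hx]) (le_jpn _) (by linarith)

end AffinePower

theorem outgoing_characteristic_integral_estimate_general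
    (c1 δ : ℝ) (hc1 : 0 < c1) (hδ : δ < 1 / 2) :
    ∃ C : ℝ, 0 < C ∧
      ∀ t r : ℝ, 0 ≤ t → c1 * t / 2 ≤ r → 1 ≤ c1 * t / 2 →
        (∫ τ in Set.Ici t,
            jpn ((c1 + 1) * τ + r - c1 * t) ^ (-2 + δ) * jpn (r - c1 * t) ^ (-(1 : ℝ) / 2))
          ≤ C * jpn (t + r) ^ (-1 + δ) * jpn (r - c1 * t) ^ (-(1 : ℝ) / 2) := by
  have ha : 0 < c1 + 1 := by linarith
  have hδ1 : 0 < 1 - δ := by linarith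
  refine ⟨Real.sqrt 2 ^ (1 - δ) / ((c1 + 1) * (1 - δ)), by positivity, fun t r ht hr h1 => ?_⟩
  have hstart : (c1 + 1) * t + (r - c1 * t) = t + r := by ring
  have hs : 1 ≤ t + r := by linarith
  have hK := Real.rpow_nonneg (jpn_pos (r - c1 * t)).le (-(1 : ℝ) / 2)
  have hbound := integral_Ioi_jpn_affine_rpow_le (b := r - c1 * t) (t := t) ha
    (by linarith : -2 + δ < -1) (by linarith)
  rw [hstart, show -1 - (-2 + δ) = 1 - δ by ring, show -2 + δ + 1 = -1 + δ by ring] at hbound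
  calc _ = (∫ τ in Ioi t, jpn ((c1 + 1) * τ + (r - c1 * t)) ^ (-2 + δ))
          * jpn (r - c1 * t) ^ (-(1 : ℝ) / 2) := by
        rw [integral_mul_const, integral_Ici_eq_integral_Ioi]
        simp only [add_sub_assoc]
    _ ≤ (t + r) ^ (-1 + δ) / ((c1 + 1) * (1 - δ)) * jpn (r - c1 * t) ^ (-(1 : ℝ) / 2) := by
        gcongr
    _ ≤ Real.sqrt 2 ^ (1 - δ) * jpn (t + r) ^ (-1 + δ) / ((c1 + 1) * (1 - δ))
          * jpn (r - c1 * t) ^ (-(1 : ℝ) / 2) := by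
        gcongr
        have h := rpow_le_sqrt_two_rpow_mul_jpn_rpow hs (by linarith : -1 + δ ≤ 0)
        rwa [show -(-1 + δ) = 1 - δ by ring] at h
    _ = _ := by ring

/-- Key integral estimate along outgoing characteristics:
for `r ≥ c₁t/2 ≥ 1`,
`∫_t^∞ ⟨(c₁+1)τ + r - c₁t⟩^{-2+δ} ⟨r - c₁t⟩^{-1/2} dτ
  ≤ C ⟨t+r⟩^{-1+δ} ⟨r - c₁t⟩^{-1/2}`. -/
theorem outgoing_characteristic_integral_estimate
    (c1 δ : ℝ) (hc1 : 0 < c1) (hδ0 : 0 < δ) (hδ : δ < 1 / 2) :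
    ∃ C : ℝ, 0 < C ∧
      ∀ t r : ℝ, 0 ≤ t → c1 * t / 2 ≤ r → 1 ≤ c1 * t / 2 →
        (∫ τ in Set.Ici t,
            jpn ((c1 + 1) * τ + r - c1 * t) ^ (-2 + δ) * jpn (r - c1 * t) ^ (-(1 : ℝ) / 2))
          ≤ C * jpn (t + r) ^ (-1 + δ) * jpn (r - c1 * t) ^ (-(1 : ℝ) / 2) :=
  outgoing_characteristic_integral_estimate_general c1 δ hc1 hδ

end
end
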